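/- arXiv:math/0512400 — 2 statements merged into one kernel-verified Lean document; each statement's English description precedes it below -/
import Mathlib

section
/- Let S₁,...,S_{d+1} be a colourful configuration in ℝ^d with the origin in its core, points in general position on the unit sphere. Fix a set D of d colours, say D = {1,...,d}. If every point of the unit sphere lies in at least d of the D-coloured simplicial cones (cones generated by one point of each colour in D), then the colourful simplicial depth of the origin is at least d² + d. -/
/-- Points are in general position if every subset of at most d+1 of them is
affinely independent. -/
def GeneralPosition (d : ℕ) (P : Set (EuclideanSpace ℝ (Fin d))) : Prop :=
  ∀ t : Finset (EuclideanSpace ℝ (Fin d)), ↑t ⊆ P → t.card ≤ d + 1 →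
    AffineIndependent ℝ (fun v : ↥t => (v : EuclideanSpace ℝ (Fin d)))

/-- If every point of the unit sphere lies in at least d of the D-coloured
simplicial cones (for D the first d colours), then the colourful simplicial
depth of the origin is at least d² + d. -/
theorem depth_ge_of_cone_depth (d : ℕ)
    (S : Fin (d + 1) → Fin (d + 1) → EuclideanSpace ℝ (Fin d))
    (hsphere : ∀ i j, ‖S i j‖ = 1)
    (hgen : GeneralPosition d (⋃ i, Set.range (S i)))
    (hcore : ∀ i, (0 : EuclideanSpace ℝ (Fin d)) ∈ convexHull ℝ (Set.range (S i)))
    (hcones : ∀ v : EuclideanSpace ℝ (Fin d), ‖v‖ = 1 →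
      d ≤ Set.ncard {t : Fin d → Fin (d + 1) |
        ∃ c : Fin d → ℝ, (∀ i, 0 ≤ c i) ∧ v = ∑ i, c i • S i.castSucc (t i)}) :
    d ^ 2 + d ≤
      Set.ncard {t : Fin (d + 1) → Fin (d + 1) |
        (0 : EuclideanSpace ℝ (Fin d)) ∈ convexHull ℝ (Set.range fun j => S j (t j))} := by
  classical
  set T : Set (Fin (d + 1) → Fin (d + 1)) :=
    {t | (0 : EuclideanSpace ℝ (Fin d)) ∈ convexHull ℝ (Set.range fun j => S j (t j))} with hTdef
  set C : Fin (d + 1) → Set (Fin d → Fin (d + 1)) := fun j =>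
    {t | ∃ c : Fin d → ℝ, (∀ i, 0 ≤ c i) ∧
      -S (Fin.last d) j = ∑ i, c i • S i.castSucc (t i)} with hCdef
  have hC : ∀ j, d ≤ (C j).ncard := by
    intro j
    have := hcones (-S (Fin.last d) j) (by simpa using hsphere (Fin.last d) j)
    simpa [hCdef] using this
  set I : Fin (d + 1) → Set (Fin (d + 1) → Fin (d + 1)) := fun j =>
    (fun u : Fin d → Fin (d + 1) => Fin.snoc u j) '' C j with hIdef
  have hinj : ∀ j : Fin (d + 1), Function.Injective
      (fun u : Fin d → Fin (d + 1) => (Fin.snoc u j : Fin (d + 1) → Fin (d + 1))) := by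
    intro j u u' h
    funext i
    have := congrFun h i.castSucc
    simpa using this
  have hIT : ∀ j, I j ⊆ T := by
    intro j x hx
    obtain ⟨u, hu, rfl⟩ := hx
    obtain ⟨c, hc0, hcsum⟩ := hu
    set w : Fin (d + 1) → ℝ := (Fin.snoc c 1 : Fin (d + 1) → ℝ) with hwdef
    -- use centerMass
    have hw : ∀ k ∈ Finset.univ, (0:ℝ) ≤ w k := by
      intro k _
      induction k using Fin.lastCases with
      | last => simp [hwdef]
      | cast i => simpa [hwdef] using hc0 i
    have hsum0 : ∑ k, w k • S k ((Fin.snoc u j : Fin (d + 1) → Fin (d + 1)) k) = 0 := by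
      rw [Fin.sum_univ_castSucc]
      simp only [hwdef, Fin.snoc_castSucc, Fin.snoc_last]
      rw [← hcsum]
      simp
    have hwpos : (0:ℝ) < ∑ k, w k := by
      rw [Fin.sum_univ_castSucc]
      have : (0:ℝ) ≤ ∑ i, c i := Finset.sum_nonneg fun i _ => hc0 i
      simp only [hwdef, Fin.snoc_castSucc, Fin.snoc_last]
      linarith
    have hz : ∀ k ∈ Finset.univ, S k ((Fin.snoc u j : Fin (d + 1) → Fin (d + 1)) k) ∈
        Set.range fun k => S k ((Fin.snoc u j : Fin (d + 1) → Fin (d + 1)) k) := fun k _ => Set.mem_range_self k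
    have hmem := Finset.centerMass_mem_convexHull Finset.univ hw hwpos hz
    have hcm : Finset.univ.centerMass (w) (fun k => S k ((Fin.snoc u j : Fin (d + 1) → Fin (d + 1)) k)) = 0 := by
      rw [Finset.centerMass, hsum0, smul_zero]
    rw [hcm] at hmem
    exact hmem
  have hfin : ∀ j, (I j).Finite := fun j => Set.toFinite _
  set F : Fin (d + 1) → Finset (Fin (d + 1) → Fin (d + 1)) := fun j => (hfin j).toFinset with hFdef
  have hdisj : ∀ j j' : Fin (d+1), j ≠ j' → Disjoint (F j) (F j') := by
    intro j j' hne
    rw [Finset.disjoint_left]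
    intro x hx hx'
    simp only [hFdef, Set.Finite.mem_toFinset, hIdef] at hx hx'
    obtain ⟨u, _, rfl⟩ := hx
    obtain ⟨u', _, h⟩ := hx'
    have := congrFun h (Fin.last d)
    simp only [Fin.snoc_last] at this
    exact hne this.symm
  have hbig : (Finset.univ.biUnion F).card ≤ T.ncard := by
    have hsub : ↑(Finset.univ.biUnion F) ⊆ T := by
      intro x hx
      simp only [Finset.coe_biUnion, Finset.mem_coe, Finset.mem_univ, Set.iUnion_true] at hx
      obtain ⟨j, hj⟩ := Set.mem_iUnion.mp hx
      exact hIT j ((hfin j).mem_toFinset.mp hj)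
    calc (Finset.univ.biUnion F).card = (↑(Finset.univ.biUnion F) : Set _).ncard := by
          rw [Set.ncard_coe_finset]
      _ ≤ T.ncard := Set.ncard_le_ncard hsub (Set.toFinite T)
  have hcard : ∀ j, d ≤ (F j).card := by
    intro j
    have : (F j).card = (I j).ncard := (Set.ncard_eq_toFinset_card _ (hfin j)).symm
    rw [this, hIdef]
    rw [Set.ncard_image_of_injective _ (hinj j)]
    exact hC j
  have hsum : d ^ 2 + d ≤ (Finset.univ.biUnion F).card := by
    rw [Finset.card_biUnion (fun j _ j' _ h => hdisj j j' h)]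
    calc d ^ 2 + d = ∑ _j : Fin (d+1), d := by
          simp [Finset.sum_const, Finset.card_univ]
          ring
      _ ≤ ∑ j, (F j).card := Finset.sum_le_sum fun j _ => hcard j
  exact le_trans hsum hbig
end

section
/- Let S₁,...,S_{d+1} be a colourful configuration on the unit sphere in ℝ^d in general position with the origin in its core. Then every point v of the configuration is a vertex of at least one colourful simplex containing the origin; equivalently, the D-depth of the antipode -v (for D the set of the other d colours) is at least 1. -/
open Set Module Function RealInnerProductSpace

theorem Set.range_update_eq_insert_image {ι α : Type*} [DecidableEq ι] (f : ι → α) (i : ι)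
    (a : α) : range (update f i a) = insert a (f '' {i}ᶜ) := by
  ext x
  constructor
  · rintro ⟨j, rfl⟩
    rcases eq_or_ne j i with rfl | hji
    · simp
    · exact Or.inr ⟨j, hji, (update_of_ne hji a f).symm⟩
  · rintro (rfl | ⟨j, hji, rfl⟩)
    · exact ⟨i, update_self i x f⟩
    · exact ⟨j, update_of_ne hji _ f⟩

theorem AffineIndependent.linearIndependent_of_apply_eq {k V ι : Type*} [DivisionRing k]
    [AddCommGroup V] [Module k V] {p : ι → V} (hp : AffineIndependent k p) (f : V →ₗ[k] k)
    {c : k} (hc : c ≠ 0) (hf : ∀ i, f (p i) = c) : LinearIndependent k p := by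
  refine linearIndependent_iff'.2 fun s w hw => hp.eq_zero_of_sum_eq_zero ?_ hw
  have := congrArg f hw
  simp only [map_sum, map_smul, hf, smul_eq_mul, map_zero, ← Finset.sum_mul] at this
  exact (mul_eq_zero.1 this).resolve_right hc

variable {E : Type*} [NormedAddCommGroup E] [InnerProductSpace ℝ E]

theorem norm_sq_le_inner_of_isMinOn {K : Set E} (hK : Convex ℝ K) {p w : E} (hp : p ∈ K)
    (hw : w ∈ K) (hmin : IsMinOn (‖·‖) K p) : ‖p‖ ^ 2 ≤ ⟪p, w⟫ := by
  have h := (norm_eq_iInf_iff_real_inner_le_zero hK hp (u := 0)).1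
    (by simpa using (hmin.iInf_eq hp).symm) w hw
  rw [zero_sub, inner_neg_left, inner_sub_right, real_inner_self_eq_norm_sq] at h
  linarith

theorem exists_inner_nonpos_of_zero_mem_convexHull {A : Set E} (h : (0 : E) ∈ convexHull ℝ A)
    (p : E) : ∃ y ∈ A, ⟪p, y⟫ ≤ 0 := by
  simpa using ((innerₗ E p).concaveOn convex_univ).exists_le_of_mem_convexHull
    (subset_univ A) h

theorem zero_mem_convexHull_insert_of_pos_smul {B : Set E} {v : E} {ε : ℝ} (hε : 0 < ε)
    (h : (0 : E) ∈ convexHull ℝ (insert (ε • v) B)) : (0 : E) ∈ convexHull ℝ (insert v B) := by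
  rcases B.eq_empty_or_nonempty with rfl | hB
  · simp only [insert_empty_eq, convexHull_singleton, mem_singleton_iff] at h ⊢
    exact ((smul_eq_zero.1 h.symm).resolve_left hε.ne').symm
  simp only [convexHull_insert hB, mem_convexJoin, mem_singleton_iff, exists_eq_left,
    mem_segment_iff_sameRay, zero_sub, sub_zero] at h ⊢
  obtain ⟨b, hb, hray⟩ := h
  refine ⟨b, hb, (SameRay.sameRay_pos_smul_right (-v) hε).trans (by rwa [smul_neg]) ?_⟩
  exact fun hv => Or.inl ((smul_eq_zero.1 hv).resolve_left hε.ne')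

variable [FiniteDimensional ℝ E]

theorem exists_finset_card_le_finrank_of_isMinOn_norm {A : Set E} {p : E}
    (hp : p ∈ convexHull ℝ A) (hmin : IsMinOn (‖·‖) (convexHull ℝ A) p) (hp0 : p ≠ 0) :
    ∃ W : Finset E, ↑W ⊆ A ∧ W.card ≤ finrank ℝ E ∧ p ∈ convexHull ℝ (W : Set E) := by
  classical
  obtain ⟨κ, _, z, w, hzA, hz, hw0, hw1, hwz⟩ := eq_pos_convex_span_of_mem_convexHull hp
  have hsupp (a : κ) : ‖p‖ ^ 2 ≤ ⟪p, z a⟫ :=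
    norm_sq_le_inner_of_isMinOn (convex_convexHull ℝ A) hp
      (subset_convexHull ℝ A (hzA ⟨a, rfl⟩)) hmin
  -- `‖p‖ ^ 2 = ⟪p, ∑ a, w a • z a⟫` is a positive average of the `⟪p, z a⟫`
  have htight (a : κ) : ⟪p, z a⟫ = ‖p‖ ^ 2 := by
    have hsum : ∑ b, w b * (⟪p, z b⟫ - ‖p‖ ^ 2) = 0 := by
      simp only [mul_sub, Finset.sum_sub_distrib, ← Finset.sum_mul, hw1, one_mul,
        ← real_inner_smul_right, ← inner_sum, hwz, real_inner_self_eq_norm_sq, sub_self]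
    have := (Finset.sum_eq_zero_iff_of_nonneg fun b _ =>
      mul_nonneg (hw0 b).le (sub_nonneg.2 (hsupp b))).1 hsum a (Finset.mem_univ a)
    linarith [(mul_eq_zero.1 this).resolve_left (hw0 a).ne']
  have hlin : LinearIndependent ℝ z :=
    hz.linearIndependent_of_apply_eq (innerₗ E p) (by positivity) htight
  refine ⟨Finset.univ.image z, ?_, Finset.card_image_le.trans hlin.fintype_card_le_finrank, ?_⟩
  all_goals rw [Finset.coe_image, Finset.coe_univ, image_univ]
  · exact hzA
  · rw [← hwz]
    exact (convex_convexHull ℝ _).sum_mem (fun a _ => (hw0 a).le) hw1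
      (fun a _ => subset_convexHull ℝ _ ⟨a, rfl⟩)

theorem exists_mem_convexHull_image_compl_singleton_of_isMinOn_norm {ι : Type*} [Fintype ι]
    (hcard : finrank ℝ E < Fintype.card ι) {g : ι → E} {p : E}
    (hp : p ∈ convexHull ℝ (range g)) (hmin : IsMinOn (‖·‖) (convexHull ℝ (range g)) p)
    (hp0 : p ≠ 0) : ∃ j, p ∈ convexHull ℝ (g '' {j}ᶜ) := by
  classical
  obtain ⟨W, hWg, hWcard, hpW⟩ := exists_finset_card_le_finrank_of_isMinOn_norm hp hmin hp0
  choose σ hσ using fun w : W => hWg w.2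
  obtain ⟨j, -, hj⟩ := Finset.exists_mem_notMem_of_card_lt_card
    (s := Finset.univ.image σ) (t := Finset.univ) <| calc
      (Finset.univ.image σ).card ≤ W.card := Finset.card_image_le.trans_eq (by simp)
      _ < _ := hWcard.trans_lt hcard
  refine ⟨j, convexHull_mono (fun w hw => ?_) hpW⟩
  refine ⟨σ ⟨w, hw⟩, ?_, hσ _⟩
  rintro rfl
  exact hj (Finset.mem_image_of_mem σ (Finset.mem_univ _))

section Colourful

variable {ι κ : Type*} [Fintype ι] [DecidableEq ι] (S : ι → κ → E) (i : ι)

theorem eq_zero_or_mem_convexHull_of_isMinOn_norm_iUnion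
    (hcard : finrank ℝ E < Fintype.card ι)
    (hcore : ∀ j ≠ i, (0 : E) ∈ convexHull ℝ (range (S j))) {u p : E} {t : ι → κ}
    (hp : p ∈ convexHull ℝ (range (update (fun j => S j (t j)) i u)))
    (hmin : IsMinOn (‖·‖)
      (⋃ t' : ι → κ, convexHull ℝ (range (update (fun j => S j (t' j)) i u))) p) :
    p = 0 ∨ p ∈ convexHull ℝ ((fun j => S j (t j)) '' {i}ᶜ) := by
  refine or_iff_not_imp_left.2 fun hp0 => ?_
  obtain ⟨j, hj⟩ := exists_mem_convexHull_image_compl_singleton_of_isMinOn_norm hcard hp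
    (hmin.on_subset (subset_iUnion_of_subset t subset_rfl)) hp0
  rcases eq_or_ne j i with rfl | hji
  · have heq : EqOn (update (fun l => S l (t l)) j u) (fun l => S l (t l)) {j}ᶜ :=
      fun l hl => update_of_ne (f := fun l => S l (t l)) hl u
    exact heq.image_eq ▸ hj
  obtain ⟨_, ⟨m, rfl⟩, hm⟩ := exists_inner_nonpos_of_zero_mem_convexHull (hcore j hji) p
  set t' := update t j m
  have hsub : update (fun l => S l (t l)) i u '' {j}ᶜ ⊆
      range (update (fun l => S l (t' l)) i u) := by
    rintro _ ⟨l, hlj, rfl⟩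
    refine ⟨l, ?_⟩
    rcases eq_or_ne l i with rfl | hli
    · simp
    · simp [t', hli, update_of_ne hlj]
  have hSm : S j m ∈ range (update (fun l => S l (t' l)) i u) := ⟨j, by simp [t', hji]⟩
  have := norm_sq_le_inner_of_isMinOn (convex_convexHull ℝ _) (convexHull_mono hsub hj)
    (subset_convexHull ℝ _ hSm) (hmin.on_subset (subset_iUnion_of_subset t' subset_rfl))
  exact absurd (by simpa using this.trans hm) hp0

variable [Nonempty κ] [Finite κ]

theorem exists_zero_mem_convexHull_or_exists_norm_le
    (hcard : finrank ℝ E < Fintype.card ι)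
    (hcore : ∀ j ≠ i, (0 : E) ∈ convexHull ℝ (range (S j))) (u : E) :
    (∃ t : ι → κ, (0 : E) ∈ convexHull ℝ (range (update (fun j => S j (t j)) i u))) ∨
      ∃ t : ι → κ, ∃ p ∈ convexHull ℝ ((fun j => S j (t j)) '' {i}ᶜ), ‖p‖ ≤ ‖u‖ := by
  set K := ⋃ t : ι → κ, convexHull ℝ (range (update (fun j => S j (t j)) i u))
  have hK : IsCompact K := isCompact_iUnion fun t => (finite_range _).isCompact_convexHull ℝ
  have huK : u ∈ K := mem_iUnion.2 ⟨Classical.arbitrary _, subset_convexHull ℝ _ ⟨i, by simp⟩⟩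
  obtain ⟨p, hpK, hmin⟩ := hK.exists_isMinOn ⟨u, huK⟩ continuous_norm.continuousOn
  obtain ⟨t, hpt⟩ := mem_iUnion.1 hpK
  rcases eq_zero_or_mem_convexHull_of_isMinOn_norm_iUnion S i hcard hcore hpt hmin with rfl | hp
  · exact Or.inl ⟨t, hpt⟩
  · exact Or.inr ⟨t, p, hp, isMinOn_iff.1 hmin u huK⟩

theorem exists_zero_mem_convexHull_update (hcard : finrank ℝ E < Fintype.card ι)
    (hcore : ∀ j ≠ i, (0 : E) ∈ convexHull ℝ (range (S j))) (v : E) :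
    ∃ t : ι → κ, (0 : E) ∈ convexHull ℝ (range (update (fun j => S j (t j)) i v)) := by
  by_contra! h
  set U := ⋃ t : ι → κ, convexHull ℝ ((fun j => S j (t j)) '' {i}ᶜ)
  have hU : IsClosed U :=
    isClosed_iUnion_of_finite fun t => (toFinite _).isCompact_convexHull ℝ |>.isClosed
  have h0U : (0 : E) ∈ closure U := by
    refine Metric.mem_closure_iff.2 fun δ hδ => ?_
    set ε := δ / (‖v‖ + 1)
    have hε : 0 < ε := by positivity
    rcases exists_zero_mem_convexHull_or_exists_norm_le S i hcard hcore (ε • v) with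
      ⟨t, ht⟩ | ⟨t, p, hp, hpv⟩
    · refine (h t ?_).elim
      rw [range_update_eq_insert_image] at ht ⊢
      exact zero_mem_convexHull_insert_of_pos_smul hε ht
    · refine ⟨p, mem_iUnion.2 ⟨t, hp⟩, ?_⟩
      calc dist 0 p = ‖p‖ := by simp
        _ ≤ ε * ‖v‖ := by rwa [norm_smul, Real.norm_of_nonneg hε.le] at hpv
        _ < δ := by
          rw [div_mul_eq_mul_div, div_lt_iff₀ (by positivity)]
          nlinarith
  obtain ⟨t, ht⟩ := mem_iUnion.1 (hU.closure_eq ▸ h0U)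
  refine h t (convexHull_mono ?_ ht)
  rw [range_update_eq_insert_image]
  exact subset_insert _ _

end Colourful

theorem every_point_in_a_colourful_simplex_general (d : ℕ)
    (S : Fin (d + 1) → Fin (d + 1) → EuclideanSpace ℝ (Fin d))
    (hcore : ∀ i, (0 : EuclideanSpace ℝ (Fin d)) ∈ convexHull ℝ (Set.range (S i))) :
    ∀ i k, ∃ t : Fin (d + 1) → Fin (d + 1), t i = k ∧
      (0 : EuclideanSpace ℝ (Fin d)) ∈ convexHull ℝ (Set.range fun j => S j (t j)) := by
  intro i k
  obtain ⟨t, ht⟩ := exists_zero_mem_convexHull_update S i (by simp) (fun j _ => hcore j) (S i k)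
  refine ⟨update t i k, update_self i k t, ?_⟩
  simpa only [apply_update] using ht

/-- Bárány: in a colourful configuration on the unit sphere with the origin in
its core, every configuration point is a vertex of at least one colourful
simplex containing the origin. -/
theorem every_point_in_a_colourful_simplex (d : ℕ)
    (S : Fin (d + 1) → Fin (d + 1) → EuclideanSpace ℝ (Fin d))
    (hsphere : ∀ i j, ‖S i j‖ = 1)
    (hgen : GeneralPosition d (⋃ i, Set.range (S i)))
    (hcore : ∀ i, (0 : EuclideanSpace ℝ (Fin d)) ∈ convexHull ℝ (Set.range (S i))) :
    ∀ i k, ∃ t : Fin (d + 1) → Fin (d + 1), t i = k ∧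
      (0 : EuclideanSpace ℝ (Fin d)) ∈ convexHull ℝ (Set.range fun j => S j (t j)) :=
  every_point_in_a_colourful_simplex_general d S hcore
end
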